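/- arXiv:1712.02107 — 5 statements merged into one kernel-verified Lean document; each statement's English description precedes it below -/
import Mathlib

section
/- For every natural number n ≥ 1, the Wallis ratio satisfies 1/√(π(n + 4/π − 1)) ≤ (2n−1)!!/(2n)!! ≤ 1/√(π(n + 1/4)). -/
open Real Filter Topology

/-- The Wallis ratio W(n) = (2n-1)!!/(2n)!!. -/
noncomputable def W (n : ℕ) : ℝ :=
  (∏ k ∈ Finset.range n, (2 * (k : ℝ) + 1)) / (∏ k ∈ Finset.range n, (2 * (k : ℝ) + 2))

/-!
Write `g_c(n) = π (n + c) W(n)²`. Since `W(n)² (2n + 1)` is the reciprocal of the `n`-th partial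
Wallis product, which tends to `π / 2`, every `g_c` tends to `1`. A one-step computation gives
`g_c(n + 1) - g_c(n) = π W(n)² / (2n + 2)² · ((1 - 4c) n + (1 - 3c))`, so `g_{1/4}` increases to `1`,
while for `c = 4/π - 1` the sequence decreases to `1` from `n = 2` on and
`g_c(1) = 1` exactly.
-/

lemma W_pos (n : ℕ) : 0 < W n :=
  div_pos (Finset.prod_pos fun _ _ => by positivity) (Finset.prod_pos fun _ _ => by positivity)

lemma W_succ (n : ℕ) : W (n + 1) = W n * ((2 * n + 1) / (2 * n + 2)) := by
  rw [W, W, Finset.prod_range_succ, Finset.prod_range_succ, div_mul_div_comm]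

lemma W_sq_mul_wallis_W (n : ℕ) : W n ^ 2 * (2 * n + 1) * Real.Wallis.W n = 1 := by
  induction n with
  | zero => simp [W, Real.Wallis.W]
  | succ n ih =>
    rw [W_succ, Real.Wallis.W_succ]
    push_cast
    field_simp
    linear_combination (2 * (n : ℝ) + 3) * ih

noncomputable def scaledWSq (c : ℝ) (n : ℕ) : ℝ := π * (n + c) * W n ^ 2

lemma tendsto_scaledWSq (c : ℝ) : Tendsto (scaledWSq c) atTop (𝓝 1) := by
  have h_lin : Tendsto (fun n : ℕ => π * (n + c) / (2 * n + 1)) atTop (𝓝 (π / 2)) := by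
    have h_odd : Tendsto (fun n : ℕ => 2 * (n : ℝ) + 1) atTop atTop :=
      tendsto_atTop_add_const_right _ _
        (tendsto_natCast_atTop_atTop.const_mul_atTop two_pos)
    have h_err : Tendsto (fun n : ℕ => π / 2 + π * (c - 1 / 2) / (2 * n + 1)) atTop
        (𝓝 (π / 2)) := by
      simpa using (tendsto_const_nhds.div_atTop h_odd).const_add (π / 2)
    refine h_err.congr fun n => ?_
    field_simp
    ring
  have h := h_lin.div Real.Wallis.tendsto_W_nhds_pi_div_two pi_div_two_pos.ne'
  rw [div_self pi_div_two_pos.ne'] at h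
  refine h.congr fun n => ?_
  have hW := (Real.Wallis.W_pos n).ne'
  simp only [Pi.div_apply, scaledWSq]
  field_simp
  linear_combination -((n : ℝ) + c) * W_sq_mul_wallis_W n

lemma scaledWSq_succ_sub (c : ℝ) (n : ℕ) :
    scaledWSq c (n + 1) - scaledWSq c n
      = π * W n ^ 2 / (2 * n + 2) ^ 2 * ((1 - 4 * c) * n + (1 - 3 * c)) := by
  rw [scaledWSq, scaledWSq, W_succ]
  push_cast
  field_simp
  ring

lemma scaledWSq_succ_sub_nonneg_iff (c : ℝ) (n : ℕ) :
    0 ≤ scaledWSq c (n + 1) - scaledWSq c n ↔ 0 ≤ (1 - 4 * c) * n + (1 - 3 * c) := by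
  have : 0 < π * W n ^ 2 / (2 * n + 2) ^ 2 := by have := W_pos n; positivity
  rw [scaledWSq_succ_sub, mul_nonneg_iff_of_pos_left this]

lemma monotone_scaledWSq {c : ℝ} (hc : c ≤ 1 / 4) : Monotone (scaledWSq c) := by
  refine monotone_nat_of_le_succ fun n => ?_
  have h := (scaledWSq_succ_sub_nonneg_iff c n).2 (by nlinarith [n.cast_nonneg (α := ℝ)])
  linarith

lemma scaledWSq_le_one {c : ℝ} (hc : c ≤ 1 / 4) (n : ℕ) : scaledWSq c n ≤ 1 :=
  (monotone_scaledWSq hc).ge_of_tendsto (tendsto_scaledWSq c) n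

lemma antitoneOn_scaledWSq {c : ℝ} {N : ℕ}
    (hN : (1 - 4 * c) * N + (1 - 3 * c) ≤ 0) : AntitoneOn (scaledWSq c) (Set.Ici N) := by
  refine antitoneOn_nat_Ici_of_succ_le fun n hn => ?_
  have hnN : (N : ℝ) ≤ n := by exact_mod_cast hn
  have h_step : (1 - 4 * c) * n + (1 - 3 * c) ≤ 0 := by nlinarith
  rw [← sub_nonpos, scaledWSq_succ_sub]
  have : 0 ≤ π * W n ^ 2 / (2 * n + 2) ^ 2 := by positivity
  exact mul_nonpos_of_nonneg_of_nonpos this h_step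

lemma one_le_scaledWSq {c : ℝ} {N n : ℕ}
    (hN : (1 - 4 * c) * N + (1 - 3 * c) ≤ 0) (hn : N ≤ n) : 1 ≤ scaledWSq c n :=
  le_of_tendsto (tendsto_scaledWSq c) <| (eventually_ge_atTop n).mono fun _ hm =>
    antitoneOn_scaledWSq hN (Set.mem_Ici.2 hn) (Set.mem_Ici.2 (hn.trans hm)) hm

lemma scaledWSq_one_four_div_pi : scaledWSq (4 / π - 1) 1 = 1 := by
  rw [scaledWSq, W, Finset.prod_range_one, Finset.prod_range_one]
  field_simp
  norm_num

lemma one_le_scaledWSq_four_div_pi {n : ℕ} (hn : 1 ≤ n) : 1 ≤ scaledWSq (4 / π - 1) n := by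
  obtain rfl | h2 := hn.eq_or_lt
  · exact scaledWSq_one_four_div_pi.ge
  have hπ := pi_pos
  -- at `N = 2` the sign condition reads `14 ≤ 44 / π`, i.e. `π ≤ 22 / 7`
  have h_two : (1 - 4 * (4 / π - 1)) * (2 : ℕ) + (1 - 3 * (4 / π - 1)) ≤ 0 := by
    have : 14 ≤ 11 * (4 / π) := by rw [← mul_div_assoc, le_div_iff₀ hπ]; linarith [pi_lt_d6]
    push_cast
    linarith
  exact one_le_scaledWSq h_two h2

lemma one_div_sqrt_le_iff {a w : ℝ} (ha : 0 < a) (hw : 0 ≤ w) :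
    1 / √a ≤ w ↔ 1 ≤ a * w ^ 2 := by
  rw [div_le_iff₀ (sqrt_pos.2 ha), ← one_le_sq_iff₀ (by positivity), mul_pow, sq_sqrt ha.le,
    mul_comm]

lemma le_one_div_sqrt_iff {a w : ℝ} (ha : 0 < a) (hw : 0 ≤ w) :
    w ≤ 1 / √a ↔ a * w ^ 2 ≤ 1 := by
  rw [le_div_iff₀ (sqrt_pos.2 ha), ← sq_le_one_iff₀ (by positivity), mul_pow, sq_sqrt ha.le,
    mul_comm]

theorem wallis_chen_qi (n : ℕ) (hn : 1 ≤ n) :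
    1 / Real.sqrt (π * ((n : ℝ) + 4 / π - 1)) ≤ W n ∧
    W n ≤ 1 / Real.sqrt (π * ((n : ℝ) + 1 / 4)) := by
  have hW := (W_pos n).le
  have h_lower := one_le_scaledWSq_four_div_pi hn
  have h_upper := scaledWSq_le_one (le_refl (1 / 4 : ℝ)) n
  rw [scaledWSq, ← add_sub_assoc] at h_lower
  rw [scaledWSq] at h_upper
  constructor
  · exact (one_div_sqrt_le_iff (by nlinarith [pi_pos]) hW).2 h_lower
  · exact (le_one_div_sqrt_iff (by positivity) hW).2 h_upper
end

section
/- In the double inequality √(e/π)(1−1/(2n))^n √(n−1)/n < W(n) ≤ (4/3)(1−1/(2n))^n √(n−1)/n for n ≥ 2, the constant 4/3 is best possible; i.e., equality in the upper bound holds at n = 2, so no smaller constant works. -/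
open Real Filter Topology

theorem wallis_four_thirds_best :
    W 2 = (4 / 3) * (1 - 1 / (2 * (2 : ℝ))) ^ 2 * Real.sqrt ((2 : ℝ) - 1) / 2 ∧
    ∀ c : ℝ, (∀ n : ℕ, 2 ≤ n →
        W n ≤ c * (1 - 1 / (2 * (n : ℝ))) ^ n * Real.sqrt ((n : ℝ) - 1) / n) →
      4 / 3 ≤ c := by
  have hW : W 2 = 3 / 8 := by
    simp [W, Finset.prod_range_succ]
    norm_num
  have h1 : Real.sqrt ((2 : ℝ) - 1) = 1 := by norm_num
  constructor
  · rw [hW, h1]; norm_num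
  · intro c hc
    have := hc 2 le_rfl
    push_cast at this
    rw [hW, h1] at this
    linarith
end

section
/- The sequence W(n) · √n · √(π/e) · (1 − 1/(2(n+1/3)))^{−(n+1/3)} converges to 1 as n → ∞. -/
/-!
The Wallis product `Real.Wallis.W n = ∏_{k<n} (2k+2)²/((2k+1)(2k+3))` equals
`1 / (W(n)² (2n+1))`, so Wallis' formula `Real.Wallis.W n → π/2` gives `W(n)² n → 1/π`,
that is `W(n) √n → 1/√π`. The remaining factor is a compound-interest limit:
`(1 - 1/(2x))^(-x) → e^{1/2}` as `x → ∞`, and `(1/√π) · √(π/e) · √e = 1`.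
-/

open Real Filter Topology

lemma W_nonneg (n : ℕ) : 0 ≤ W n := by
  unfold W
  positivity

lemma wallis_W_mul_W_sq_mul (n : ℕ) : Wallis.W n * (W n ^ 2 * (2 * n + 1)) = 1 := by
  induction n with
  | zero => simp [Wallis.W, W]
  | succ n ih =>
    rw [Wallis.W_succ, W_succ]
    push_cast
    field_simp
    linear_combination (2 * (n : ℝ) + 3) * ih

lemma tendsto_W_sq_mul : Tendsto (fun n : ℕ => W n ^ 2 * (2 * n + 1)) atTop (𝓝 (2 / π)) := by
  have h (n : ℕ) : W n ^ 2 * (2 * n + 1) = (Wallis.W n)⁻¹ :=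
    (inv_eq_of_mul_eq_one_right (wallis_W_mul_W_sq_mul n)).symm
  simpa only [h, inv_div] using Wallis.tendsto_W_nhds_pi_div_two.inv₀ (by positivity)

lemma tendsto_W_mul_sqrt : Tendsto (fun n : ℕ => W n * √n) atTop (𝓝 (√π)⁻¹) := by
  have hhalf : Tendsto (fun n : ℕ => (n : ℝ) / (2 * n + 1)) atTop (𝓝 (1 / 2)) := by
    have h (n : ℕ) : (n : ℝ) / (2 * n + 1) = 1 / 2 * ((n : ℝ) / (n + 1 / 2)) := by
      field_simp
    simpa only [h, mul_one] using (tendsto_natCast_div_add_atTop (1 / 2 : ℝ)).const_mul (1 / 2)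
  have hsq : Tendsto (fun n : ℕ => W n ^ 2 * n) atTop (𝓝 π⁻¹) := by
    have h (n : ℕ) : W n ^ 2 * n = W n ^ 2 * (2 * n + 1) * (n / (2 * n + 1)) := by
      field_simp
    convert tendsto_W_sq_mul.mul hhalf using 1
    · exact funext h
    · field_simp
  have h (n : ℕ) : W n * √n = √(W n ^ 2 * n) := by
    rw [sqrt_mul (sq_nonneg _), sqrt_sq (W_nonneg n)]
  simpa only [h, sqrt_inv] using hsq.sqrt

lemma tendsto_one_add_div_rpow_neg_exp (t : ℝ) :
    Tendsto (fun x : ℝ => (1 + t / x) ^ (-x)) atTop (𝓝 (exp (-t))) := by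
  have hbase : ∀ᶠ x : ℝ in atTop, 0 ≤ 1 + t / x := by
    have : Tendsto (fun x : ℝ => 1 + t / x) atTop (𝓝 (1 + 0)) :=
      tendsto_const_nhds.add (tendsto_const_nhds.div_atTop tendsto_id)
    exact this.eventually (eventually_ge_nhds (by norm_num))
  rw [exp_neg]
  refine ((tendsto_one_add_div_rpow_exp t).inv₀ (exp_ne_zero t)).congr' ?_
  filter_upwards [hbase] with x hx
  rw [rpow_neg hx]

theorem wallis_asymptotic :
    Tendsto (fun n : ℕ =>
        W n * Real.sqrt n * Real.sqrt (π / Real.exp 1) *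
          (1 - 1 / (2 * ((n : ℝ) + 1 / 3))) ^ (-(((n : ℝ) + 1 / 3)) : ℝ))
      atTop (nhds 1) := by
  have hpow : Tendsto (fun n : ℕ => (1 - 1 / (2 * ((n : ℝ) + 1 / 3))) ^ (-(((n : ℝ) + 1 / 3))))
      atTop (𝓝 (exp (1 / 2))) := by
    have h (x : ℝ) : 1 - 1 / (2 * x) = 1 + -(1 / 2) / x := by ring
    simpa only [h, neg_neg, Function.comp_def] using
      (tendsto_one_add_div_rpow_neg_exp (-(1 / 2))).comp
        (tendsto_atTop_add_const_right _ (1 / 3 : ℝ) tendsto_natCast_atTop_atTop)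
  have hlim : (√π)⁻¹ * √(π / exp 1) * exp (1 / 2) = 1 := by
    rw [exp_half, ← sqrt_inv, ← sqrt_mul (by positivity), ← sqrt_mul (by positivity),
      show π⁻¹ * (π / exp 1) * exp 1 = 1 by field_simp, sqrt_one]
  simpa only [hlim] using (tendsto_W_mul_sqrt.mul_const √(π / exp 1)).mul hpow
end

section
/- If a real sequence (x_n) converges to 0 and lim_{n→∞} n^s (x_n − x_{n+1}) = l for some real s > 1 and finite l, then lim_{n→∞} n^{s−1} x_n = l/(s−1). -/
/-! With `b n = n ^ (1 - s)`, the increments satisfy `n ^ s * (b n - b (n + 1)) → s - 1` (the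
derivative of `t ↦ (1 + t) ^ (1 - s)` at `0`, read along `t = 1 / n`), so the hypothesis says
`(x n - x (n + 1)) / (b n - b (n + 1)) → l / (s - 1)`. As `x` and `b` both tend to `0`, the `0 / 0`
form of the Stolz–Cesàro theorem turns this into `x n / b n = n ^ (s - 1) * x n → l / (s - 1)`. -/

open Real Filter Topology

theorem norm_le_of_norm_sub_succ_le_sub_succ {E : Type*} [SeminormedAddCommGroup E]
    {c : ℕ → E} {d : ℕ → ℝ} {N : ℕ} (hc : Tendsto c atTop (𝓝 0)) (hd : Tendsto d atTop (𝓝 0))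
    (h : ∀ m ≥ N, ‖c m - c (m + 1)‖ ≤ d m - d (m + 1)) {n : ℕ} (hn : N ≤ n) :
    ‖c n‖ ≤ d n := by
  have htele : ∀ k, ‖c n - c (n + k)‖ ≤ d n - d (n + k) := by
    intro k
    induction k with
    | zero => simp
    | succ k ih =>
      calc ‖c n - c (n + k + 1)‖ ≤ ‖c n - c (n + k)‖ + ‖c (n + k) - c (n + k + 1)‖ :=
            norm_sub_le_norm_sub_add_norm_sub ..
        _ ≤ (d n - d (n + k)) + (d (n + k) - d (n + k + 1)) := add_le_add ih (h _ (by omega))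
        _ = d n - d (n + k + 1) := by ring
  have hshift : Tendsto (n + ·) atTop atTop := (tendsto_add_atTop_nat n).congr (add_comm · n)
  have hlim_c := ((hc.comp hshift).const_sub (c n)).norm
  have hlim_d := (hd.comp hshift).const_sub (d n)
  rw [sub_zero] at hlim_c hlim_d
  exact le_of_tendsto_of_tendsto' hlim_c hlim_d htele

theorem tendsto_div_of_tendsto_sub_succ_div_sub_succ {a b : ℕ → ℝ} {L : ℝ}
    (ha : Tendsto a atTop (𝓝 0)) (hb : Tendsto b atTop (𝓝 0))
    (hb_anti : ∀ᶠ n in atTop, b (n + 1) < b n)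
    (h : Tendsto (fun n => (a n - a (n + 1)) / (b n - b (n + 1))) atTop (𝓝 L)) :
    Tendsto (fun n => a n / b n) atTop (𝓝 L) := by
  rw [Metric.tendsto_atTop]
  intro ε hε
  obtain ⟨N, hN⟩ := eventually_atTop.1 <|
    hb_anti.and (h.eventually (Metric.closedBall_mem_nhds L (half_pos hε)))
  have hstep : ∀ m ≥ N, ‖(a m - L * b m) - (a (m + 1) - L * b (m + 1))‖
      ≤ ε / 2 * b m - ε / 2 * b (m + 1) := by
    intro m hm
    obtain ⟨hlt, hclose⟩ := hN m hm
    have hpos : 0 < b m - b (m + 1) := sub_pos.2 hlt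
    rw [Real.dist_eq, div_sub' hpos.ne', abs_div, abs_of_pos hpos, div_le_iff₀ hpos] at hclose
    rw [Real.norm_eq_abs, show a m - L * b m - (a (m + 1) - L * b (m + 1))
      = a m - a (m + 1) - (b m - b (m + 1)) * L by ring]
    linarith
  have hbound : ∀ n ≥ N, |a n - L * b n| ≤ ε / 2 * b n := fun n hn =>
    norm_le_of_norm_sub_succ_le_sub_succ (ha.sub (hb.const_mul L) |>.trans (by simp))
      (by simpa using hb.const_mul (ε / 2)) hstep hn
  refine ⟨N, fun n hn => ?_⟩
  -- `b (n + 1) ≥ 0` is forced by `hbound` at `n + 1`.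
  have hbn : 0 < b n := by
    have := hbound (n + 1) (by omega)
    nlinarith [abs_nonneg (a (n + 1) - L * b (n + 1)), (hN n hn).1]
  rw [Real.dist_eq, div_sub' hbn.ne', abs_div, abs_of_pos hbn, div_lt_iff₀ hbn, mul_comm (b n) L]
  linarith [hbound n hn, mul_pos hε hbn]

theorem tendsto_rpow_mul_rpow_add_one_sub_rpow (p : ℝ) :
    Tendsto (fun x : ℝ => x ^ (1 - p) * ((x + 1) ^ p - x ^ p)) atTop (𝓝 p) := by
  have hderiv : HasDerivAt (fun t : ℝ => (1 + t) ^ p) p 0 := by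
    simpa using ((hasDerivAt_id (0 : ℝ)).const_add 1).rpow_const (p := p) (by simp)
  have hslope := hderiv.tendsto_slope_zero_right.comp tendsto_inv_atTop_nhdsGT_zero
  refine hslope.congr' ?_
  filter_upwards [eventually_gt_atTop 0] with x hx
  have hsplit : (x + 1) ^ p = x ^ p * (1 + x⁻¹) ^ p := by
    rw [← mul_rpow hx.le (by positivity), mul_add, mul_inv_cancel₀ hx.ne', mul_one]
  have hx1 : x ^ (1 - p) * x ^ p = x := by
    rw [← rpow_add hx, sub_add_cancel, rpow_one]
  simp only [Function.comp_apply, inv_inv, zero_add, add_zero, one_rpow, smul_eq_mul, hsplit]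
  linear_combination (1 - (1 + x⁻¹) ^ p) * hx1

theorem mortici_lemma (x : ℕ → ℝ) (s l : ℝ) (hs : 1 < s)
    (hx : Tendsto x atTop (nhds 0))
    (hl : Tendsto (fun n : ℕ => (n : ℝ) ^ s * (x n - x (n + 1))) atTop (nhds l)) :
    Tendsto (fun n : ℕ => (n : ℝ) ^ (s - 1) * x n) atTop (nhds (l / (s - 1))) := by
  set b : ℕ → ℝ := fun n => (n : ℝ) ^ (1 - s)
  have hb : Tendsto b atTop (𝓝 0) := by
    have := (tendsto_rpow_neg_atTop (sub_pos.2 hs)).comp tendsto_natCast_atTop_atTop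
    rwa [neg_sub] at this
  have hb_anti : ∀ᶠ n in atTop, b (n + 1) < b n := by
    filter_upwards [eventually_gt_atTop 0] with n hn
    exact rpow_lt_rpow_of_neg (by positivity) (by push_cast; linarith) (by linarith)
  have hb_diff : Tendsto (fun n : ℕ => (n : ℝ) ^ s * (b n - b (n + 1))) atTop (𝓝 (s - 1)) := by
    have := ((tendsto_rpow_mul_rpow_add_one_sub_rpow (1 - s)).comp
      tendsto_natCast_atTop_atTop).neg
    refine (this.congr fun n => ?_).trans (by rw [neg_sub])
    simp only [b, Function.comp_apply, sub_sub_cancel, Nat.cast_add, Nat.cast_one]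
    ring
  have hratio : Tendsto (fun n => (x n - x (n + 1)) / (b n - b (n + 1))) atTop
      (𝓝 (l / (s - 1))) := by
    refine (hl.div hb_diff (by linarith)).congr' ?_
    filter_upwards [eventually_gt_atTop 0] with n hn
    exact mul_div_mul_left _ _ (by positivity)
  refine (tendsto_div_of_tendsto_sub_succ_div_sub_succ hx hb hb_anti hratio).congr fun n => ?_
  rw [show b n = (n : ℝ) ^ (1 - s) from rfl, ← neg_sub s 1, rpow_neg n.cast_nonneg, div_inv_eq_mul,
    mul_comm]
end

section
/- With u_0(n) = ln W(n) − 1/2 + (1/2)ln π − (n+1/3)·ln(1 − 1/(2(n+1/3))) + (1/2)ln n, the sequence n^3 · u_0(n) converges to 1/144 as n → ∞. -/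
/-!
Put `v n = log W(n) + log (π n) / 2` and `φ x = -1/(8x) + 1/(192x³)`. Wallis' product gives
`v n → 0`, and `v n - v (n+1) = -log (1 - 1/(2(n+1))) + log (1 - 1/(n+1)) / 2`. Expanding both
logarithms to fourth order bounds each increment of `v n - φ n` by the corresponding increment
of `1/n⁴`, so telescoping to infinity gives `|v n - φ n| ≤ 1/n⁴`. Finally
`u0 n = v n - 1/2 - m log (1 - 1/(2m))` with `m = n + 1/3`; expanding this logarithm to fourth
order leaves a rational function of `n` whose terms of order `1/n` and `1/n²` cancel, and
`|n³ u0 n - 1/144| ≤ 3/n`.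
-/

open Real Filter Topology

noncomputable def u0 (n : ℕ) : ℝ :=
  Real.log (W n) - 1 / 2 + (1 / 2) * Real.log π -
    ((n : ℝ) + 1 / 3) * Real.log (1 - 1 / (2 * ((n : ℝ) + 1 / 3))) +
    (1 / 2) * Real.log n

lemma wallis_W_eq_inv_W_sq_mul (n : ℕ) :
    Real.Wallis.W n = (W n ^ 2 * (2 * n + 1))⁻¹ := by
  induction n with
  | zero => simp [Real.Wallis.W, W]
  | succ n ih =>
    rw [Real.Wallis.W_succ, ih, W_succ]
    have := W_pos n
    push_cast
    field_simp
    ring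

lemma tendsto_W_sq_mul_pi_mul : Tendsto (fun n : ℕ ↦ W n ^ 2 * (π * n)) atTop (𝓝 1) := by
  have hW := Real.Wallis.tendsto_W_nhds_pi_div_two.inv₀ (by positivity)
  have hq := tendsto_add_mul_div_add_mul_atTop_nhds (0 : ℝ) 1 π two_ne_zero
  convert hW.mul hq using 1
  · ext n
    rw [wallis_W_eq_inv_W_sq_mul, inv_inv]
    field_simp
    ring
  · field_simp

noncomputable def wallisLogRemainder (n : ℕ) : ℝ := log (W n) + log (π * n) / 2

lemma tendsto_wallisLogRemainder : Tendsto wallisLogRemainder atTop (𝓝 0) := by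
  have h := (tendsto_W_sq_mul_pi_mul.log one_ne_zero).div_const 2
  rw [log_one, zero_div] at h
  refine h.congr' ?_
  filter_upwards [eventually_ne_atTop 0] with n hn
  rw [log_mul (by have := W_pos n; positivity) (by positivity), log_pow, wallisLogRemainder]
  push_cast
  ring

lemma wallisLogRemainder_sub_succ {n : ℕ} (hn : n ≠ 0) :
    wallisLogRemainder n - wallisLogRemainder (n + 1) =
      -log (1 - 1 / (2 * ((n : ℝ) + 1))) + log (1 - 1 / ((n : ℝ) + 1)) / 2 := by
  have hW := W_pos n
  have h1 : 1 - 1 / (2 * ((n : ℝ) + 1)) = (2 * n + 1) / (2 * n + 2) := by field_simp; ring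
  have h2 : 1 - 1 / ((n : ℝ) + 1) = n / (n + 1) := by field_simp; ring
  rw [wallisLogRemainder, wallisLogRemainder, W_succ, h1, h2]
  push_cast
  rw [log_mul hW.ne' (by positivity), log_mul pi_ne_zero (by positivity),
    log_mul pi_ne_zero (by positivity), log_div (by positivity) (by positivity),
    log_div (by positivity) (by positivity)]
  ring

noncomputable def negLogOneSubTaylor (z : ℝ) : ℝ := z + z ^ 2 / 2 + z ^ 3 / 3 + z ^ 4 / 4

lemma abs_log_one_sub_add_negLogOneSubTaylor_le {z : ℝ} (hz₀ : 0 ≤ z) (hz : z ≤ 1 / 2) :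
    |log (1 - z) + negLogOneSubTaylor z| ≤ 2 * z ^ 5 := by
  have h := abs_log_sub_add_sum_range_le (x := z) (by rw [abs_of_nonneg hz₀]; linarith) 4
  have hsum : ∑ i ∈ Finset.range 4, z ^ (i + 1) / (i + 1) = negLogOneSubTaylor z := by
    simp only [Finset.sum_range_succ, Finset.sum_range_zero, negLogOneSubTaylor]
    norm_num
  rw [hsum, abs_of_nonneg hz₀, add_comm] at h
  have hrem : z ^ 5 ≤ 2 * z ^ 5 * (1 - z) := by nlinarith [pow_nonneg hz₀ 5]
  exact h.trans ((div_le_iff₀ (by linarith)).2 hrem)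

/-- `log W(n) = -log (π n) / 2 + wallisLogExpansion n + O(n⁻⁴)`. -/
noncomputable def wallisLogExpansion (x : ℝ) : ℝ := -(1 / (8 * x)) + 1 / (192 * x ^ 3)

lemma abs_negLogOneSubTaylor_sub_wallisLogExpansion_sub_le {x : ℝ} (hx : 1 ≤ x) :
    |negLogOneSubTaylor (1 / (2 * (x + 1))) - negLogOneSubTaylor (1 / (x + 1)) / 2
        - (wallisLogExpansion x - wallisLogExpansion (x + 1))|
      ≤ 1 / x ^ 4 - 1 / (x + 1) ^ 4 - 2 * (1 / (2 * (x + 1))) ^ 5 - (1 / (x + 1)) ^ 5 := by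
  -- After `x = 1 + t` both one-sided bounds have numerators with positive coefficients in `t`.
  obtain ⟨t, ht, rfl⟩ : ∃ t, 0 ≤ t ∧ x = 1 + t := ⟨x - 1, by linarith, by ring⟩
  have : 0 < 1 + t := by linarith
  have : 0 < 2 + t := by linarith
  unfold negLogOneSubTaylor wallisLogExpansion
  rw [abs_le]
  constructor
  · have h : 0 ≤ (5582 + 12919 * t + 11209 * t ^ 2 + 4262 * t ^ 3 + 582 * t ^ 4)
        / (192 * (1 + t) ^ 4 * (2 + t) ^ 5) := by positivity
    field_simp at h ⊢
    ring_nf at h ⊢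
    linarith
  · have h : 0 ≤ (5530 + 12713 * t + 10919 * t ^ 2 + 4090 * t ^ 3 + 546 * t ^ 4)
        / (192 * (1 + t) ^ 4 * (2 + t) ^ 5) := by positivity
    field_simp at h ⊢
    ring_nf at h ⊢
    linarith

lemma abs_log_sub_wallisLogExpansion_sub_le {x : ℝ} (hx : 1 ≤ x) :
    |-log (1 - 1 / (2 * (x + 1))) + log (1 - 1 / (x + 1)) / 2
        - (wallisLogExpansion x - wallisLogExpansion (x + 1))| ≤ 1 / x ^ 4 - 1 / (x + 1) ^ 4 := by
  have h₁ := abs_le.mp <| abs_log_one_sub_add_negLogOneSubTaylor_le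
    (z := 1 / (2 * (x + 1))) (by positivity) (by rw [div_le_div_iff₀] <;> linarith)
  have h₂ := abs_le.mp <| abs_log_one_sub_add_negLogOneSubTaylor_le
    (z := 1 / (x + 1)) (by positivity) (by rw [div_le_div_iff₀] <;> linarith)
  have h₃ := abs_le.mp <| abs_negLogOneSubTaylor_sub_wallisLogExpansion_sub_le hx
  rw [abs_le]
  constructor <;> linarith [h₁.1, h₁.2, h₂.1, h₂.2, h₃.1, h₃.2]

lemma abs_le_of_abs_sub_succ_le {a b : ℕ → ℝ} {n : ℕ}
    (ha : Tendsto a atTop (𝓝 0)) (hb : Tendsto b atTop (𝓝 0))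
    (h : ∀ k ≥ n, |a k - a (k + 1)| ≤ b k - b (k + 1)) : |a n| ≤ b n := by
  have htele : ∀ N ≥ n, |a n - a N| + b N ≤ b n := by
    intro N hN
    induction N, hN using Nat.le_induction with
    | base => simp
    | succ N hN ih =>
      have := abs_sub_le (a n) (a N) (a (N + 1))
      linarith [h N hN]
  have hlim : Tendsto (fun N ↦ |a n - a N| + b N) atTop (𝓝 (|a n - 0| + 0)) :=
    ((tendsto_const_nhds.sub ha).abs).add hb
  rw [sub_zero, add_zero] at hlim
  exact le_of_tendsto hlim (eventually_atTop.2 ⟨n, htele⟩)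

lemma tendsto_wallisLogExpansion : Tendsto (fun n : ℕ ↦ wallisLogExpansion n) atTop (𝓝 0) := by
  have h := tendsto_inv_atTop_nhds_zero_nat (𝕜 := ℝ)
  simpa [wallisLogExpansion] using (h.mul_const 8⁻¹).neg.add ((h.pow 3).mul_const 192⁻¹)

lemma abs_wallisLogRemainder_sub_wallisLogExpansion_le {n : ℕ} (hn : n ≠ 0) :
    |wallisLogRemainder n - wallisLogExpansion n| ≤ 1 / (n : ℝ) ^ 4 := by
  refine abs_le_of_abs_sub_succ_le (b := fun k : ℕ ↦ 1 / (k : ℝ) ^ 4)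
    (by simpa using tendsto_wallisLogRemainder.sub tendsto_wallisLogExpansion)
    (by simpa using (tendsto_inv_atTop_nhds_zero_nat (𝕜 := ℝ)).pow 4) fun k hk ↦ ?_
  have hk₀ : k ≠ 0 := by omega
  have := abs_log_sub_wallisLogExpansion_sub_le (x := k) (Nat.one_le_cast.2 (by omega))
  rw [← wallisLogRemainder_sub_succ hk₀] at this
  push_cast
  convert this using 2
  ring

lemma u0_eq {n : ℕ} (hn : n ≠ 0) :
    u0 n = wallisLogRemainder n - 1 / 2
      - ((n : ℝ) + 1 / 3) * log (1 - 1 / (2 * ((n : ℝ) + 1 / 3))) := by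
  rw [u0, wallisLogRemainder, log_mul pi_ne_zero (by positivity)]
  ring

lemma abs_cube_mul_wallisLogExpansion_add_sub_le {x : ℝ} (hx : 0 < x) :
    |x ^ 3 * (wallisLogExpansion x + (x + 1 / 3) * negLogOneSubTaylor (1 / (2 * (x + 1 / 3)))
        - 1 / 2) - 1 / 144| ≤ 1 / x := by
  have hclosed : x ^ 3 * (wallisLogExpansion x
        + (x + 1 / 3) * negLogOneSubTaylor (1 / (2 * (x + 1 / 3))) - 1 / 2) - 1 / 144
      = -((1 + 12 * x + 126 * x ^ 2 + 297 * x ^ 3) / (576 * (3 * x + 1) ^ 4)) := by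
    unfold wallisLogExpansion negLogOneSubTaylor
    field_simp
    ring
  rw [hclosed, abs_neg, abs_of_nonneg (by positivity), div_le_div_iff₀ (by positivity) hx]
  nlinarith [pow_pos hx 2, pow_pos hx 3, pow_pos hx 4]

lemma abs_cube_mul_u0_sub_le {n : ℕ} (hn : n ≠ 0) :
    |(n : ℝ) ^ 3 * u0 n - 1 / 144| ≤ 3 / (n : ℝ) := by
  have hx : (1 : ℝ) ≤ n := Nat.one_le_cast.2 (by omega)
  have hz_le : 1 / (2 * ((n : ℝ) + 1 / 3)) ≤ 1 / 2 := by rw [div_le_div_iff₀] <;> linarith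
  have hV := abs_wallisLogRemainder_sub_wallisLogExpansion_le hn
  have hL := abs_log_one_sub_add_negLogOneSubTaylor_le (by positivity) hz_le
  have hR := abs_cube_mul_wallisLogExpansion_add_sub_le (x := n) (by positivity)
  rw [u0_eq hn]
  set x : ℝ := (n : ℝ)
  set m := x + 1 / 3 with hm
  set z := 1 / (2 * m) with hz
  have h₁ : |x ^ 3 * (wallisLogRemainder n - wallisLogExpansion x)| ≤ 1 / x := by
    rw [abs_mul, abs_of_nonneg (by positivity)]
    calc x ^ 3 * |wallisLogRemainder n - wallisLogExpansion x| ≤ x ^ 3 * (1 / x ^ 4) := by gcongr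
      _ = 1 / x := by field_simp
  have h₃ : |x ^ 3 * m * (log (1 - z) + negLogOneSubTaylor z)| ≤ 1 / x := by
    rw [abs_mul, abs_of_nonneg (by positivity)]
    calc x ^ 3 * m * |log (1 - z) + negLogOneSubTaylor z| ≤ x ^ 3 * m * (2 * z ^ 5) := by gcongr
      _ = x ^ 3 / (16 * m ^ 4) := by rw [hz]; field_simp; ring
      _ ≤ 1 / x := by
        rw [div_le_div_iff₀ (by positivity) (by positivity)]
        nlinarith [pow_le_pow_left₀ (by positivity : 0 ≤ x) (show x ≤ m by linarith) 4,
          pow_nonneg (show 0 ≤ m by positivity) 4]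
  have hsplit : x ^ 3 * (wallisLogRemainder n - 1 / 2 - m * log (1 - z)) - 1 / 144
      = x ^ 3 * (wallisLogRemainder n - wallisLogExpansion x)
        + (x ^ 3 * (wallisLogExpansion x + m * negLogOneSubTaylor z - 1 / 2) - 1 / 144)
        - x ^ 3 * m * (log (1 - z) + negLogOneSubTaylor z) := by ring
  rw [hsplit, show 3 / x = 1 / x + 1 / x + 1 / x by ring]
  rw [abs_le] at h₁ hR h₃ ⊢
  constructor <;> linarith [h₁.1, h₁.2, hR.1, hR.2, h₃.1, h₃.2]

theorem u0_limit :
    Tendsto (fun n : ℕ => (n : ℝ) ^ 3 * u0 n) atTop (nhds (1 / 144)) := by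
  rw [tendsto_iff_norm_sub_tendsto_zero]
  refine squeeze_zero_norm' ?_ (tendsto_const_div_atTop_nhds_zero_nat 3)
  filter_upwards [eventually_ne_atTop 0] with n hn
  simpa using abs_cube_mul_u0_sub_le hn
end
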